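/- arXiv:1303.4979 — 2 statements merged into one kernel-verified Lean document; each statement's English description precedes it below -/
import Mathlib

section
/- For every p ∈ (0,1), the first-stage probability satisfies p_{1,n} ~ 1/(√(2π·p·(1-p))·√n) as n → ∞, i.e. lim_{n→∞} p_{1,n}·√(2π·p·(1-p)·n) = 1. -/
/-!
Taking logarithms, `log (P_n(p) · √(2πp(1-p)n))` equals
`(log n! - ℓ n) - (log Γ(np+1) - ℓ (np)) - (log Γ(n(1-p)+1) - ℓ (n(1-p)))`, where
`ℓ x = x log x - x + log (2πx) / 2` is the logarithm of Stirling's approximation to `Γ(x+1)`;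
so it suffices that `log Γ(x+1) - ℓ x → 0` along real `x → ∞`. This reduces to Stirling's formula
for factorials: by log-convexity of `Γ`, `log Γ(m+t+1)` lies between `log m! + t log m` and
`log m! + t log (m+1)` for `0 ≤ t ≤ 1`, and `ℓ (m+t) - ℓ m` satisfies the same bounds up to
`O(log (m+1) - log m)`.
-/

open Real Filter Topology

/-- Generalized binomial coefficient `binom(n, α) = n! / (Γ(α+1)·Γ(n-α+1))`. -/
noncomputable def gbinom (n : ℕ) (a : ℝ) : ℝ :=
  (n.factorial : ℝ) / (Real.Gamma (a + 1) * Real.Gamma ((n : ℝ) - a + 1))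

/-- The function `P_n(p) = binom(n, np) · p^(np) · (1-p)^(n(1-p))`. -/
noncomputable def Pn (n : ℕ) (p : ℝ) : ℝ :=
  gbinom n ((n : ℝ) * p) * p ^ ((n : ℝ) * p) * (1 - p) ^ ((n : ℝ) * (1 - p))

noncomputable def logStirling (x : ℝ) : ℝ := x * log x - x + log (2 * π * x) / 2

/-- The tangent-line inequality `g b ≥ g a + (b - a) * g' a` for the convex `g x = x log x - x`. -/
lemma mul_log_sub_le_mul_log_sub {a b : ℝ} (ha : 0 < a) (hb : 0 < b) :
    b * log a - a ≤ b * log b - b := by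
  have h := mul_le_mul_of_nonneg_left (log_le_sub_one_of_pos (div_pos ha hb)) hb.le
  rw [log_div ha.ne' hb.ne', mul_sub, mul_sub, mul_div_cancel₀ _ hb.ne'] at h
  linarith

lemma mul_log_le_logStirling_add_sub {x t : ℝ} (hx : 0 < x) (ht : 0 ≤ t) :
    t * log x ≤ logStirling (x + t) - logStirling x := by
  have hxt : 0 < x + t := by linarith
  have h := mul_log_sub_le_mul_log_sub hx hxt
  have hlog : log (2 * π * x) ≤ log (2 * π * (x + t)) := by gcongr; linarith
  unfold logStirling
  linarith

lemma logStirling_add_sub_le {x t : ℝ} (hx : 0 < x) (ht0 : 0 ≤ t) (ht1 : t ≤ 1) :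
    logStirling (x + t) - logStirling x ≤ t * log (x + 1) + (log (x + 1) - log x) / 2 := by
  have hxt : 0 < x + t := by linarith
  have h := mul_log_sub_le_mul_log_sub hxt hx
  have hlog : log (x + t) ≤ log (x + 1) := log_le_log hxt (by linarith)
  have hmul : t * log (x + t) ≤ t * log (x + 1) := mul_le_mul_of_nonneg_left hlog ht0
  have h2π : 2 * π ≠ 0 := by positivity
  unfold logStirling
  rw [log_mul h2π hxt.ne', log_mul h2π hx.ne']
  linarith

lemma log_comp_Gamma_add_one {y : ℝ} (hy : 0 < y) :
    (log ∘ Gamma) (y + 1) = (log ∘ Gamma) y + log y := by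
  rw [Function.comp_apply, Gamma_add_one hy.ne', log_mul hy.ne' (Gamma_pos_of_pos hy).ne',
    add_comm, Function.comp_apply]

lemma log_Gamma_le_log_factorial_add_mul_log (m : ℕ) {t : ℝ} (ht0 : 0 ≤ t) (ht1 : t ≤ 1) :
    log (Gamma (m + t + 1)) ≤ log m.factorial + t * log (m + 1) := by
  rcases ht0.eq_or_lt with rfl | ht0
  · simp [← Gamma_nat_eq_factorial]
  have h := BohrMollerup.f_add_nat_le convexOn_log_Gamma log_comp_Gamma_add_one
    m.succ_ne_zero ht0 ht1
  simp only [Function.comp_apply, Nat.cast_succ, Gamma_nat_eq_factorial] at h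
  convert h using 3; ring

lemma log_factorial_add_mul_log_le_log_Gamma {m : ℕ} (hm : 1 ≤ m) {t : ℝ} (ht0 : 0 ≤ t) :
    log m.factorial + t * log m ≤ log (Gamma (m + t + 1)) := by
  rcases ht0.eq_or_lt with rfl | ht0
  · simp [← Gamma_nat_eq_factorial]
  have h := BohrMollerup.f_add_nat_ge convexOn_log_Gamma log_comp_Gamma_add_one
    (Nat.succ_le_succ hm) ht0
  simp only [Function.comp_apply, Nat.cast_succ, Gamma_nat_eq_factorial, add_sub_cancel_right] at h
  convert h using 3; ring

lemma tendsto_log_factorial_sub_logStirling :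
    Tendsto (fun n : ℕ => log n.factorial - logStirling n) atTop (𝓝 0) := by
  have h := (Stirling.tendsto_stirlingSeq_sqrt_pi.log (by positivity)).sub_const (log √π)
  rw [sub_self] at h
  refine h.congr' ?_
  filter_upwards [eventually_gt_atTop 0] with n hn
  have hn' : (0 : ℝ) < n := by exact_mod_cast hn
  rw [Stirling.log_stirlingSeq_formula, logStirling, log_sqrt pi_pos.le,
    log_div hn'.ne' (exp_ne_zero 1), log_exp, mul_comm (2 : ℝ) π, mul_assoc,
    log_mul pi_ne_zero (by positivity)]
  ring

lemma abs_log_Gamma_sub_logStirling_sub_le {m : ℕ} (hm : 1 ≤ m) {t : ℝ} (ht0 : 0 ≤ t)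
    (ht1 : t ≤ 1) :
    |(log (Gamma (m + t + 1)) - logStirling (m + t)) - (log m.factorial - logStirling m)|
      ≤ 2 * (log (m + 1) - log m) := by
  have hm0 : (0 : ℝ) < m := by exact_mod_cast hm
  have hΓ_le := log_Gamma_le_log_factorial_add_mul_log m ht0 ht1
  have hΓ_ge := log_factorial_add_mul_log_le_log_Gamma hm ht0
  have hφ_ge := mul_log_le_logStirling_add_sub hm0 ht0
  have hφ_le := logStirling_add_sub_le hm0 ht0 ht1
  have hδ : t * (log (m + 1) - log m) ≤ log (m + 1) - log m :=
    mul_le_of_le_one_left (sub_nonneg.2 (log_le_log hm0 (by linarith))) ht1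
  rw [abs_le]
  constructor <;> linarith

theorem tendsto_log_Gamma_add_one_sub_logStirling :
    Tendsto (fun x : ℝ => log (Gamma (x + 1)) - logStirling x) atTop (𝓝 0) := by
  have hfloor : Tendsto (fun x : ℝ => ⌊x⌋₊) atTop atTop := tendsto_nat_floor_atTop
  have hfact := tendsto_log_factorial_sub_logStirling.comp hfloor
  have hδ := (tendsto_log_nat_add_one_sub_log.comp hfloor).const_mul 2
  rw [mul_zero] at hδ
  have herr : Tendsto (fun x : ℝ => (log (Gamma (x + 1)) - logStirling x)
      - (log ⌊x⌋₊.factorial - logStirling ⌊x⌋₊)) atTop (𝓝 0) := by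
    refine squeeze_zero_norm' ?_ hδ
    filter_upwards [eventually_ge_atTop 1] with x hx
    have hm : 1 ≤ ⌊x⌋₊ := Nat.one_le_floor_iff x |>.2 hx
    have hx0 : 0 ≤ x := by linarith
    have h := abs_log_Gamma_sub_logStirling_sub_le hm (t := x - ⌊x⌋₊)
      (sub_nonneg.2 (Nat.floor_le hx0)) (by linarith [Nat.lt_floor_add_one x])
    rw [add_sub_cancel] at h
    exact h
  simpa using herr.add hfact

lemma logStirling_mul_add_logStirling_mul {x a b : ℝ} (hx : 0 < x) (ha : 0 < a) (hb : 0 < b)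
    (hab : a + b = 1) :
    logStirling (x * a) + logStirling (x * b)
      = logStirling x + x * a * log a + x * b * log b + log (2 * π * a * b * x) / 2 := by
  have h2πx : 0 < 2 * π * x := by positivity
  have hxa : log (x * a) = log x + log a := log_mul hx.ne' ha.ne'
  have hxb : log (x * b) = log x + log b := log_mul hx.ne' hb.ne'
  have h2πxa : log (2 * π * (x * a)) = log (2 * π * x) + log a := by
    rw [← mul_assoc, log_mul h2πx.ne' ha.ne']
  have h2πxb : log (2 * π * (x * b)) = log (2 * π * x) + log b := by
    rw [← mul_assoc, log_mul h2πx.ne' hb.ne']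
  have h2πabx : log (2 * π * a * b * x) = log (2 * π * x) + log a + log b := by
    rw [show 2 * π * a * b * x = 2 * π * x * a * b by ring, log_mul (by positivity) hb.ne',
      log_mul h2πx.ne' ha.ne']
  simp only [logStirling]
  rw [hxa, hxb, h2πxa, h2πxb, h2πabx]
  linear_combination (x * log x - x) * hab

lemma Pn_mul_sqrt_eq_exp {n : ℕ} (hn : 0 < n) {p : ℝ} (hp0 : 0 < p) (hp1 : p < 1) :
    Pn n p * √(2 * π * p * (1 - p) * n)
      = exp ((log n.factorial - logStirling n)
          - (log (Gamma (n * p + 1)) - logStirling (n * p))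
          - (log (Gamma (n * (1 - p) + 1)) - logStirling (n * (1 - p)))) := by
  have hn0 : (0 : ℝ) < n := by exact_mod_cast hn
  have hq0 : 0 < 1 - p := by linarith
  have hφ := logStirling_mul_add_logStirling_mul hn0 hp0 hq0 (add_sub_cancel p 1)
  have hexp : (log n.factorial - logStirling n)
          - (log (Gamma (n * p + 1)) - logStirling (n * p))
          - (log (Gamma (n * (1 - p) + 1)) - logStirling (n * (1 - p)))
        = log n.factorial - log (Gamma (n * p + 1)) - log (Gamma (n * (1 - p) + 1))
          + log p * (n * p) + log (1 - p) * (n * (1 - p)) + log (2 * π * p * (1 - p) * n) / 2 := by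
    linarith
  have hΓp := Gamma_pos_of_pos (by positivity : (0 : ℝ) < n * p + 1)
  have hΓq := Gamma_pos_of_pos (by positivity : (0 : ℝ) < n * (1 - p) + 1)
  rw [hexp, exp_add, exp_add, exp_add, exp_sub, exp_sub, exp_log (by positivity), exp_log hΓp,
    exp_log hΓq, ← rpow_def_of_pos hp0, ← rpow_def_of_pos hq0, ← log_sqrt (by positivity),
    exp_log (by positivity), Pn, gbinom, show (n : ℝ) - n * p = n * (1 - p) by ring, div_div]

/-- For every `p ∈ (0,1)`, `p_{1,n} = P_n(p) ~ 1/(√(2π·p·(1-p))·√n)` as `n → ∞`,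
i.e. `lim_{n→∞} P_n(p)·√(2π·p·(1-p)·n) = 1`. -/
theorem first_stage_asymptotics (p : ℝ) (hp : p ∈ Set.Ioo (0:ℝ) 1) :
    Tendsto (fun n : ℕ => Pn n p * Real.sqrt (2 * π * p * (1 - p) * n)) atTop (𝓝 1) := by
  obtain ⟨hp0, hp1⟩ := hp
  have hΓ := tendsto_log_Gamma_add_one_sub_logStirling
  have hexponent := (tendsto_log_factorial_sub_logStirling.sub
      (hΓ.comp (tendsto_natCast_atTop_atTop.atTop_mul_const hp0))).sub
      (hΓ.comp (tendsto_natCast_atTop_atTop.atTop_mul_const (sub_pos.2 hp1)))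
  rw [sub_zero, sub_zero] at hexponent
  have hlim := (continuous_exp.tendsto 0).comp hexponent
  rw [exp_zero] at hlim
  refine hlim.congr' ?_
  filter_upwards [eventually_gt_atTop 0] with n hn
  exact (Pn_mul_sqrt_eq_exp hn hp0 hp1).symm
end

section
/- For every positive integer n, let p_n ∈ (0,1) be the unique fixed point of P_n in (0,1). Then the derivative of P_n at the fixed point satisfies |P_n'(p_n)| < 1. -/
open Real Filter Topology

/-!
On `[0, 1]`, `log P_n(p) = log n! - log Γ(np + 1) - log Γ(n(1-p) + 1) - n H(p)` with `H` the
binary entropy. Writing `ψ` for the digamma function and `g(z) = ψ(z + 1) - log z`, at the fixed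
point this gives `P_n'(p) = x (g(y) - g(x))` with `x = np`, `y = n(1-p)`. Log-convexity of `Γ`
yields `0 ≤ g(z) < 1/z`, hence `P_n'(p) > -1`, and `P_n'(p) < x/y ≤ 1` as soon as `p ≤ 1/2`.
Since `P_n(0) = 1`, the intermediate value theorem and uniqueness give `p ≤ b` whenever
`P_n(b) ≤ b`. This yields `p ≤ 1/2` for `n ≥ 2`, because `P_n(1/2) ≤ 1/2`, and `p ≤ 7/10` for
`n = 1`, where the sharper bound `g(z) ≥ 1/(2z+1)²` finishes the argument.
-/

open Set

namespace Real

variable {x y : ℝ}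

lemma hasDerivAt_log_Gamma (hx : 0 < x) : HasDerivAt (log ∘ Gamma) (logDeriv Gamma x) x := by
  have hΓ : DifferentiableAt ℝ Gamma x :=
    differentiableAt_Gamma fun m => (neg_nonpos.2 m.cast_nonneg).trans_lt hx |>.ne'
  simpa [logDeriv_apply, Function.comp_def] using hΓ.hasDerivAt.log (Gamma_pos_of_pos hx).ne'

lemma log_Gamma_add_one (hx : 0 < x) : log (Gamma (x + 1)) = log x + log (Gamma x) := by
  rw [Gamma_add_one hx.ne', log_mul hx.ne' (Gamma_pos_of_pos hx).ne']

lemma Gamma_midpoint_sq_le (hx : 0 < x) (hy : 0 < y) :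
    Gamma ((x + y) / 2) ^ 2 ≤ Gamma x * Gamma y := by
  have h := Gamma_mul_add_mul_le_rpow_Gamma_mul_rpow_Gamma hx hy (a := 1 / 2) (b := 1 / 2)
    (by norm_num) (by norm_num) (by norm_num)
  rw [← sqrt_eq_rpow, ← sqrt_eq_rpow, ← sqrt_mul (Gamma_pos_of_pos hx).le,
    show 1 / 2 * x + 1 / 2 * y = (x + y) / 2 by ring] at h
  calc Gamma ((x + y) / 2) ^ 2 ≤ √(Gamma x * Gamma y) ^ 2 :=
        pow_le_pow_left₀ (Gamma_pos_of_pos (by positivity)).le h 2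
    _ = Gamma x * Gamma y := sq_sqrt (mul_pos (Gamma_pos_of_pos hx) (Gamma_pos_of_pos hy)).le

lemma Gamma_add_half_sq_le (hx : 0 < x) : Gamma (x + 1 / 2) ^ 2 ≤ x * Gamma x ^ 2 := by
  have h := Gamma_midpoint_sq_le hx (by linarith : 0 < x + 1)
  rwa [show (x + (x + 1)) / 2 = x + 1 / 2 by ring, Gamma_add_one hx.ne', ← mul_assoc,
    mul_comm _ x, mul_assoc, ← sq] at h

lemma logDeriv_Gamma_le_log (hx : 0 < x) : logDeriv Gamma x ≤ log x := by
  have h := convexOn_log_Gamma.le_slope_of_hasDerivAt (mem_Ioi.2 hx)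
    (mem_Ioi.2 (by linarith : 0 < x + 1)) (lt_add_one x) (hasDerivAt_log_Gamma hx)
  rwa [slope_def_field, Function.comp_apply, Function.comp_apply, log_Gamma_add_one hx,
    add_sub_cancel_right, add_sub_cancel_left, div_one] at h

lemma two_mul_log_sub_log_le_logDeriv_Gamma (hx : 1 / 2 < x) :
    2 * log (x - 1 / 2) - log x ≤ logDeriv Gamma x := by
  have hx₀ : 0 < x - 1 / 2 := by linarith
  have h := convexOn_log_Gamma.slope_le_of_hasDerivAt (mem_Ioi.2 hx₀)
    (mem_Ioi.2 (by linarith : 0 < x)) (by linarith) (hasDerivAt_log_Gamma (by linarith))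
  rw [slope_def_field, Function.comp_apply, Function.comp_apply, sub_sub_cancel] at h
  -- `Γ(x + 1/2) = (x - 1/2) Γ(x - 1/2)` turns the half-step bound into a bound on this slope
  have hhalf := Gamma_add_half_sq_le (by linarith : 0 < x)
  rw [show x + 1 / 2 = x - 1 / 2 + 1 by ring, Gamma_add_one hx₀.ne'] at hhalf
  have hlog := log_le_log (by have := Gamma_pos_of_pos hx₀; positivity) hhalf
  rw [mul_pow, log_mul (by positivity) (by have := Gamma_pos_of_pos hx₀; positivity),
    log_mul (by linarith) (by have := Gamma_pos_of_pos (by linarith : 0 < x); positivity),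
    log_pow, log_pow, log_pow] at hlog
  rw [div_le_iff₀ (by norm_num)] at h
  push_cast at hlog
  linarith

lemma rpow_mul_self_eq_exp (hx : 0 ≤ x) (c : ℝ) :
    x ^ (c * x) = exp (c * (x * log x)) := by
  rcases hx.eq_or_lt with rfl | hx
  · simp
  · rw [rpow_def_of_pos hx]; ring_nf

end Real

noncomputable def digammaGap (z : ℝ) : ℝ := logDeriv Gamma (z + 1) - log z

section digammaGap

variable {x y z : ℝ}

lemma inv_sq_two_mul_add_one_le_digammaGap (hz : 0 < z) :
    ((2 * z + 1) ^ 2)⁻¹ ≤ digammaGap z := by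
  have hψ := two_mul_log_sub_log_le_logDeriv_Gamma (by linarith : 1 / 2 < z + 1)
  set t := (z + 1 / 2) ^ 2 / (z * (z + 1))
  have hlog_t : log t = 2 * log (z + 1 / 2) - log (z + 1) - log z := by
    rw [log_div (by positivity) (by positivity), log_mul hz.ne' (by positivity), log_pow]
    push_cast; ring
  have ht : 1 - t⁻¹ = ((2 * z + 1) ^ 2)⁻¹ := by
    simp only [t]; field_simp; ring
  have := one_sub_inv_le_log_of_pos (by positivity : 0 < t)
  rw [digammaGap, show z + 1 - 1 / 2 = z + 1 / 2 by ring] at *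
  linarith

lemma digammaGap_nonneg (hz : 0 < z) : 0 ≤ digammaGap z :=
  (inv_nonneg.2 (sq_nonneg _)).trans (inv_sq_two_mul_add_one_le_digammaGap hz)

lemma digammaGap_le_log (hz : 0 < z) : digammaGap z ≤ log ((z + 1) / z) := by
  rw [digammaGap, log_div (by linarith) hz.ne']
  linarith [logDeriv_Gamma_le_log (by linarith : 0 < z + 1)]

lemma digammaGap_lt_inv (hz : 0 < z) : digammaGap z < z⁻¹ := by
  refine (digammaGap_le_log hz).trans_lt ((log_lt_sub_one_of_pos (by positivity) ?_).trans_eq ?_)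
  · rw [Ne, div_eq_one_iff_eq hz.ne']; linarith
  · field_simp; ring

lemma neg_one_lt_mul_digammaGap_sub (hx : 0 < x) (hy : 0 < y) :
    -1 < x * (digammaGap y - digammaGap x) := by
  have h := mul_lt_mul_of_pos_left (digammaGap_lt_inv hx) hx
  rw [mul_inv_cancel₀ hx.ne'] at h
  nlinarith [digammaGap_nonneg hy]

lemma mul_digammaGap_sub_lt_one_of_le (hx : 0 < x) (hxy : x ≤ y) :
    x * (digammaGap y - digammaGap x) < 1 := by
  have hy : 0 < y := hx.trans_le hxy
  have h := mul_lt_mul_of_pos_left (digammaGap_lt_inv hy) hx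
  have hxy' : x * y⁻¹ ≤ 1 := by rw [← div_eq_mul_inv, div_le_one hy]; exact hxy
  nlinarith [digammaGap_nonneg hx]

lemma mul_digammaGap_one_sub_sub_lt_one (hx : 0 < x) (hx₇ : x ≤ 7 / 10) :
    x * (digammaGap (1 - x) - digammaGap x) < 1 := by
  rcases le_or_gt x (1 / 2) with hx₂ | hx₂
  · exact mul_digammaGap_sub_lt_one_of_le hx (by linarith)
  have hA : 4 * digammaGap (1 - x) ≤ 9 * log 2 := by
    have h₁ : digammaGap (1 - x) ≤ log (13 / 3) :=
      (digammaGap_le_log (by linarith)).trans <| log_le_log (by apply div_pos <;> linarith) <| by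
        rw [div_le_div_iff₀ (by linarith) (by norm_num)]; linarith
    have h₂ : 4 * log (13 / 3) ≤ 9 * log 2 := by
      have h := log_le_log (by norm_num) (by norm_num : (13 / 3 : ℝ) ^ 4 ≤ 2 ^ 9)
      rw [log_pow, log_pow] at h
      exact_mod_cast h
    linarith
  have hB : 1 / 9 ≤ x * digammaGap x := by
    have h := mul_le_mul_of_nonneg_left (inv_sq_two_mul_add_one_le_digammaGap hx) hx.le
    refine le_trans ?_ h
    rw [← div_eq_mul_inv, div_le_div_iff₀ (by norm_num) (by positivity)]
    nlinarith
  nlinarith [log_two_lt_d9, digammaGap_nonneg (by linarith : 0 < 1 - x)]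

end digammaGap

noncomputable def logPn (n : ℕ) (x : ℝ) : ℝ :=
  log n.factorial - log (Gamma (n * x + 1)) - log (Gamma (n * (1 - x) + 1)) - n * binEntropy x

section Pn

variable {n : ℕ} {x : ℝ}

lemma Pn_eq_exp_logPn (hx : x ∈ Icc 0 1) : Pn n x = exp (logPn n x) := by
  have hΓ₁ := Gamma_pos_of_pos (by nlinarith [hx.1] : (0 : ℝ) < n * x + 1)
  have hΓ₂ := Gamma_pos_of_pos (by nlinarith [hx.2] : (0 : ℝ) < n * (1 - x) + 1)
  have hH : exp (-(n * binEntropy x)) = x ^ (n * x) * (1 - x) ^ (n * (1 - x)) := by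
    rw [rpow_mul_self_eq_exp hx.1, rpow_mul_self_eq_exp (sub_nonneg.2 hx.2), ← exp_add,
      binEntropy_eq_negMulLog_add_negMulLog_one_sub, negMulLog, negMulLog]
    ring_nf
  rw [logPn, sub_eq_add_neg _ (n * binEntropy x), exp_add, hH, exp_sub, exp_sub,
    exp_log (Nat.cast_pos.2 n.factorial_pos), exp_log hΓ₁, exp_log hΓ₂, Pn, gbinom,
    show (n : ℝ) - n * x + 1 = n * (1 - x) + 1 by ring, div_div, mul_assoc]

lemma Pn_zero : Pn n 0 = 1 := by
  simp [Pn, gbinom, Gamma_nat_eq_factorial, Nat.factorial_ne_zero]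

lemma continuousOn_Pn (n : ℕ) : ContinuousOn (Pn n) (Icc 0 1) := by
  refine ContinuousOn.congr (f := exp ∘ logPn n) (fun x hx => ?_) (fun x hx => Pn_eq_exp_logPn hx)
  have hΓ {a : ℝ} (ha : 0 < a) : ContinuousAt (log ∘ Gamma) a :=
    (hasDerivAt_log_Gamma ha).continuousAt
  have h₁ : ContinuousAt (fun t : ℝ => log (Gamma (n * t + 1))) x :=
    (hΓ (by nlinarith [hx.1])).comp (f := fun t : ℝ => n * t + 1) (by fun_prop)
  have h₂ : ContinuousAt (fun t : ℝ => log (Gamma (n * (1 - t) + 1))) x :=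
    (hΓ (by nlinarith [hx.2])).comp (f := fun t : ℝ => n * (1 - t) + 1) (by fun_prop)
  exact (continuous_exp.continuousAt.comp
    (((continuousAt_const.sub h₁).sub h₂).sub (continuousAt_const.mul
      binEntropy_continuous.continuousAt))).continuousWithinAt

lemma hasDerivAt_logPn (hx : x ∈ Ioo 0 1) :
    HasDerivAt (logPn n) (n * (digammaGap (n * (1 - x)) - digammaGap (n * x))) x := by
  have hx₀ : 0 < x := hx.1
  have hx₁ : 0 < 1 - x := sub_pos.2 hx.2
  have h₁ : HasDerivAt (fun t => log (Gamma (n * t + 1))) (logDeriv Gamma (n * x + 1) * n) x := by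
    have := (hasDerivAt_log_Gamma (by positivity : (0 : ℝ) < n * x + 1)).comp x
      (((hasDerivAt_id x).const_mul (n : ℝ)).add_const 1)
    rwa [mul_one] at this
  have h₂ : HasDerivAt (fun t => log (Gamma (n * (1 - t) + 1)))
      (logDeriv Gamma (n * (1 - x) + 1) * -n) x := by
    have := (hasDerivAt_log_Gamma (by positivity : (0 : ℝ) < n * (1 - x) + 1)).comp x
      ((((hasDerivAt_id x).const_sub 1).const_mul (n : ℝ)).add_const 1)
    rwa [mul_neg_one] at this
  have hH := (hasDerivAt_binEntropy hx₀.ne' hx.2.ne).const_mul (n : ℝ)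
  refine ((((hasDerivAt_const x _).sub h₁).sub h₂).sub hH).congr_deriv ?_
  rcases eq_or_ne (n : ℝ) 0 with hn | hn
  · simp [hn]
  · simp only [digammaGap, log_mul hn hx₀.ne', log_mul hn hx₁.ne']
    ring

lemma hasDerivAt_Pn (hx : x ∈ Ioo 0 1) :
    HasDerivAt (Pn n) (Pn n x * (n * (digammaGap (n * (1 - x)) - digammaGap (n * x)))) x := by
  rw [Pn_eq_exp_logPn (Ioo_subset_Icc_self hx)]
  refine (hasDerivAt_logPn hx).exp.congr_of_eventuallyEq ?_
  filter_upwards [isOpen_Ioo.mem_nhds hx] with y hy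
  exact Pn_eq_exp_logPn (Ioo_subset_Icc_self hy)

lemma le_of_Pn_le_self {p b : ℝ} (hb : b ∈ Ioo 0 1) (hPb : Pn n b ≤ b)
    (huniq : ∀ q ∈ Ioo (0 : ℝ) 1, Pn n q = q → q = p) : p ≤ b := by
  obtain ⟨c, hc, hcfix⟩ := exists_mem_Icc_isFixedPt
    ((continuousOn_Pn n).mono (Icc_subset_Icc_right hb.2.le)) hb.1.le (by simp [Pn_zero]) hPb
  have hc₀ : c ≠ 0 := by
    rintro rfl
    simp [Function.IsFixedPt, Pn_zero] at hcfix
  rw [← huniq c ⟨hc.1.lt_of_ne' hc₀, hc.2.trans_lt hb.2⟩ hcfix]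
  exact hc.2

end Pn

lemma Pn_half (n : ℕ) : Pn n (1 / 2) = n.factorial / (Gamma (n / 2 + 1) ^ 2 * 2 ^ n) := by
  rw [Pn, gbinom, show (1 : ℝ) - 1 / 2 = 1 / 2 by norm_num, mul_assoc, ← rpow_add (by norm_num),
    ← mul_add, add_halves, mul_one, rpow_natCast, show (n : ℝ) - n * (1 / 2) = n / 2 by ring,
    show (n : ℝ) * (1 / 2) = n / 2 by ring, div_pow, one_pow, ← sq]
  field_simp

lemma Pn_half_add_two (n : ℕ) : Pn (n + 2) (1 / 2) = (n + 1) / (n + 2) * Pn n (1 / 2) := by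
  have hΓ := Gamma_pos_of_pos (by positivity : (0 : ℝ) < n / 2 + 1)
  rw [Pn_half, Pn_half, Nat.factorial_succ, Nat.factorial_succ,
    show ((n + 2 : ℕ) : ℝ) / 2 + 1 = (n / 2 + 1) + 1 by push_cast; ring,
    Gamma_add_one (by positivity)]
  push_cast
  field_simp
  ring

lemma Pn_half_le {n : ℕ} (hn : 2 ≤ n) : Pn n (1 / 2) ≤ 1 / 2 := by
  induction n using Nat.strong_induction_on with
  | _ n ih =>
    match n, hn with
    | 2, _ =>
      rw [Pn_half]; norm_num
    | 3, _ =>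
      rw [Pn_half, show ((3 : ℕ) : ℝ) / 2 + 1 = 1 / 2 + 1 + 1 by norm_num,
        Gamma_add_one (by norm_num), Gamma_add_one (by norm_num), Gamma_one_half_eq]
      rw [mul_pow, mul_pow, sq_sqrt pi_pos.le, div_le_iff₀ (by positivity)]
      norm_num
      nlinarith [pi_gt_three]
    | m + 4, _ =>
      rw [Pn_half_add_two]
      calc ((m + 2 : ℕ) + 1 : ℝ) / ((m + 2 : ℕ) + 2) * Pn (m + 2) (1 / 2)
          ≤ ((m + 2 : ℕ) + 1 : ℝ) / ((m + 2 : ℕ) + 2) * (1 / 2) :=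
            mul_le_mul_of_nonneg_left (ih (m + 2) (by omega) (by omega)) (by positivity)
        _ ≤ 1 / 2 := by
            rw [div_mul_eq_mul_div, div_le_iff₀ (by positivity)]; linarith

lemma Pn_one_seven_tenths_le : Pn 1 (7 / 10) ≤ 7 / 10 := by
  have hΓ : π / 4 ≤ Gamma (13 / 10) * Gamma (17 / 10) := by
    have h := Gamma_midpoint_sq_le (x := 13 / 10) (y := 17 / 10) (by norm_num) (by norm_num)
    rwa [show ((13 / 10 + 17 / 10) / 2 : ℝ) = 1 / 2 + 1 by norm_num, Gamma_add_one (by norm_num),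
      Gamma_one_half_eq, mul_pow, sq_sqrt pi_pos.le,
      show ((1 : ℝ) / 2) ^ 2 * π = π / 4 by ring] at h
  set X : ℝ := (7 / 10 : ℝ) ^ (7 / 10 : ℝ) * (3 / 10 : ℝ) ^ (3 / 10 : ℝ)
  have hPn : Pn 1 (7 / 10) = X / (Gamma (13 / 10) * Gamma (17 / 10)) := by
    norm_num [Pn, gbinom, X]; ring
  have hX : X < 7 * π / 40 := by
    have hX10 : X ^ 10 = (7 / 10 : ℝ) ^ 7 * (3 / 10 : ℝ) ^ 3 := by
      rw [mul_pow, ← rpow_natCast, ← rpow_natCast, ← rpow_mul (by norm_num),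
        ← rpow_mul (by norm_num)]
      norm_num
    refine lt_of_pow_lt_pow_left₀ 10 (by positivity) ?_
    rw [hX10]
    calc (7 / 10 : ℝ) ^ 7 * (3 / 10) ^ 3 < (7 * 3.141592 / 40) ^ 10 := by norm_num
      _ ≤ (7 * π / 40) ^ 10 := by gcongr; exact pi_gt_d6.le
  rw [hPn, div_le_iff₀ (by positivity)]
  nlinarith [pi_pos, (by positivity : 0 < X)]

/-- For every positive integer `n`, if `p ∈ (0,1)` is the unique fixed point of `P_n`
in `(0,1)`, then `|P_n'(p)| < 1`. -/
theorem abs_deriv_at_fixed_point_lt_one (n : ℕ) (hn : 0 < n)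
    (p : ℝ) (hp : p ∈ Set.Ioo (0:ℝ) 1) (hfix : Pn n p = p)
    (huniq : ∀ q ∈ Set.Ioo (0:ℝ) 1, Pn n q = q → q = p) :
    |deriv (Pn n) p| < 1 := by
  have hx : 0 < (n : ℝ) * p := mul_pos (Nat.cast_pos.2 hn) hp.1
  have hy : 0 < (n : ℝ) * (1 - p) := mul_pos (Nat.cast_pos.2 hn) (sub_pos.2 hp.2)
  have hderiv : deriv (Pn n) p = n * p * (digammaGap (n * (1 - p)) - digammaGap (n * p)) := by
    rw [(hasDerivAt_Pn hp).deriv, hfix]; ring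
  rw [hderiv, abs_lt]
  refine ⟨neg_one_lt_mul_digammaGap_sub hx hy, ?_⟩
  obtain rfl | hn₂ : n = 1 ∨ 2 ≤ n := by omega
  · have hp₇ : p ≤ 7 / 10 := le_of_Pn_le_self (by norm_num) Pn_one_seven_tenths_le huniq
    simpa using mul_digammaGap_one_sub_sub_lt_one hp.1 hp₇
  · have hp₂ : p ≤ 1 / 2 := le_of_Pn_le_self (by norm_num) (Pn_half_le hn₂) huniq
    exact mul_digammaGap_sub_lt_one_of_le hx (by nlinarith)
end
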